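/- Let U ⊆ ℝ³ be open, let κ ∈ ℝ, and let ε, μ ∈ ℂ with μ ≠ 0 be constants. Suppose E, ξ : ℝ³ → ℂ³ are twice continuously differentiable on U and satisfy the time-harmonic Maxwell equation curl(μ⁻¹ curl E) = κ²εE and the adjoint equation curl(conj(μ)⁻¹ curl ξ) = κ²·conj(ε)·ξ at every point of U. Then the vector field W = (μ⁻¹ curl E) × conj(ξ) + E × conj(conj(μ)⁻¹ curl ξ) satisfies div W = 0 at every point of U. (This is the pointwise form of the fundamental relation between electric and magnetic fluxes used to derive the UWVF.) -/

import Mathlib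

open Complex

/-- Partial derivative in the `j`-th coordinate direction of a function `ℝ³ → ℂ`. -/
noncomputable def pd (j : Fin 3) (f : (Fin 3 → ℝ) → ℂ) (x : Fin 3 → ℝ) : ℂ :=
  fderiv ℝ f x (Pi.single j 1)

/-- The curl of a vector field `ℝ³ → ℂ³`. -/
noncomputable def curl3 (F : (Fin 3 → ℝ) → Fin 3 → ℂ) (x : Fin 3 → ℝ) : Fin 3 → ℂ :=
  ![pd 1 (fun y => F y 2) x - pd 2 (fun y => F y 1) x,
    pd 2 (fun y => F y 0) x - pd 0 (fun y => F y 2) x,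
    pd 0 (fun y => F y 1) x - pd 1 (fun y => F y 0) x]

/-- The divergence of a vector field `ℝ³ → ℂ³`. -/
noncomputable def div3 (F : (Fin 3 → ℝ) → Fin 3 → ℂ) (x : Fin 3 → ℝ) : ℂ :=
  ∑ j, pd j (fun y => F y j) x

/-- The cross product on `ℂ³`. -/
def cross3 (u v : Fin 3 → ℂ) : Fin 3 → ℂ :=
  ![u 1 * v 2 - u 2 * v 1, u 2 * v 0 - u 0 * v 2, u 0 * v 1 - u 1 * v 0]

/-- Componentwise complex conjugation on `ℂ³`. -/
def conjV (v : Fin 3 → ℂ) : Fin 3 → ℂ := fun i => (starRingEnd ℂ) (v i)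

/- Auxiliary lemmas -/

lemma pd_add {f g : (Fin 3 → ℝ) → ℂ} {x} (hf : DifferentiableAt ℝ f x)
    (hg : DifferentiableAt ℝ g x) (j : Fin 3) :
    pd j (fun y => f y + g y) x = pd j f x + pd j g x := by
  simp [pd, fderiv_fun_add hf hg]

lemma pd_sub {f g : (Fin 3 → ℝ) → ℂ} {x} (hf : DifferentiableAt ℝ f x)
    (hg : DifferentiableAt ℝ g x) (j : Fin 3) :
    pd j (fun y => f y - g y) x = pd j f x - pd j g x := by
  simp [pd, fderiv_fun_sub hf hg]

lemma pd_mul {f g : (Fin 3 → ℝ) → ℂ} {x} (hf : DifferentiableAt ℝ f x)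
    (hg : DifferentiableAt ℝ g x) (j : Fin 3) :
    pd j (fun y => f y * g y) x = pd j f x * g x + f x * pd j g x := by
  simp [pd, fderiv_fun_mul hf hg]; ring

lemma pd_const_mul {f : (Fin 3 → ℝ) → ℂ} {x} (hf : DifferentiableAt ℝ f x)
    (c : ℂ) (j : Fin 3) :
    pd j (fun y => c * f y) x = c * pd j f x := by
  simp [pd, fderiv_const_mul hf c]

lemma diff_conj {f : (Fin 3 → ℝ) → ℂ} {x} (hf : DifferentiableAt ℝ f x) :
    DifferentiableAt ℝ (fun y => (starRingEnd ℂ) (f y)) x :=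
  (Complex.conjCLE.differentiableAt).comp x hf

lemma pd_conj {f : (Fin 3 → ℝ) → ℂ} {x} (hf : DifferentiableAt ℝ f x) (j : Fin 3) :
    pd j (fun y => (starRingEnd ℂ) (f y)) x = (starRingEnd ℂ) (pd j f x) := by
  have h : (fun y => (starRingEnd ℂ) (f y)) = ⇑Complex.conjCLE ∘ f := rfl
  rw [pd, h, (Complex.conjCLE.hasFDerivAt.comp x hf.hasFDerivAt).fderiv]
  rfl

lemma curl3_conjV (G : (Fin 3 → ℝ) → Fin 3 → ℂ) (x : Fin 3 → ℝ)
    (hG : ∀ i, DifferentiableAt ℝ (fun y => G y i) x) :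
    curl3 (fun y => conjV (G y)) x = conjV (curl3 G x) := by
  funext i
  fin_cases i <;>
    simp [curl3, conjV, pd_conj (hG 0), pd_conj (hG 1), pd_conj (hG 2), map_sub]

lemma div3_cross (F G : (Fin 3 → ℝ) → Fin 3 → ℂ) (x : Fin 3 → ℝ)
    (hF : ∀ i, DifferentiableAt ℝ (fun y => F y i) x)
    (hG : ∀ i, DifferentiableAt ℝ (fun y => G y i) x) :
    div3 (fun y => cross3 (F y) (G y)) x
      = ∑ i, (curl3 F x i * G x i - F x i * curl3 G x i) := by
  have h0 : (fun y => cross3 (F y) (G y) 0)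
      = fun y => F y 1 * G y 2 - F y 2 * G y 1 := rfl
  have h1 : (fun y => cross3 (F y) (G y) 1)
      = fun y => F y 2 * G y 0 - F y 0 * G y 2 := rfl
  have h2 : (fun y => cross3 (F y) (G y) 2)
      = fun y => F y 0 * G y 1 - F y 1 * G y 0 := rfl
  rw [div3, Fin.sum_univ_three, h0, h1, h2,
    pd_sub ((hF 1).fun_mul (hG 2)) ((hF 2).fun_mul (hG 1)) 0,
    pd_sub ((hF 2).fun_mul (hG 0)) ((hF 0).fun_mul (hG 2)) 1,
    pd_sub ((hF 0).fun_mul (hG 1)) ((hF 1).fun_mul (hG 0)) 2,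
    pd_mul (hF 1) (hG 2) 0, pd_mul (hF 2) (hG 1) 0,
    pd_mul (hF 2) (hG 0) 1, pd_mul (hF 0) (hG 2) 1,
    pd_mul (hF 0) (hG 1) 2, pd_mul (hF 1) (hG 0) 2,
    Fin.sum_univ_three]
  simp only [curl3, Matrix.cons_val_zero, Matrix.cons_val_one, Matrix.head_cons,
    Matrix.cons_val_two, Matrix.tail_cons]
  ring

lemma div3_add (F G : (Fin 3 → ℝ) → Fin 3 → ℂ) (x : Fin 3 → ℝ)
    (hF : ∀ i, DifferentiableAt ℝ (fun y => F y i) x)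
    (hG : ∀ i, DifferentiableAt ℝ (fun y => G y i) x) :
    div3 (fun y => F y + G y) x = div3 F x + div3 G x := by
  simp only [div3, Pi.add_apply]
  rw [← Finset.sum_add_distrib]
  exact Finset.sum_congr rfl fun j _ => pd_add (hF j) (hG j) j

/-- Differentiability of partial derivatives of a `C²` function on an open set. -/
lemma diff_pd_of_contDiffAt {f : (Fin 3 → ℝ) → ℂ} {x} (hf : ContDiffAt ℝ 2 f x)
    (j : Fin 3) : DifferentiableAt ℝ (pd j f) x := by
  have h1 : ContDiffAt ℝ 1 (fderiv ℝ f) x := hf.fderiv_right (le_refl _)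
  have h2 : ContDiffAt ℝ 1
      (⇑(ContinuousLinearMap.apply ℝ ℂ (Pi.single j (1:ℝ))) ∘ fderiv ℝ f) x :=
    ((ContinuousLinearMap.apply ℝ ℂ (Pi.single j (1:ℝ))).contDiff.contDiffAt).comp x h1
  exact h2.differentiableAt one_ne_zero

/-- The pointwise form of the fundamental relation between electric and magnetic
fluxes used to derive the UWVF: if `E` solves the time-harmonic Maxwell equation and
`ξ` solves the adjoint equation on an open set `U`, then the field
`W = (μ⁻¹ curl E) × conj ξ + E × conj(conj(μ)⁻¹ curl ξ)` is divergence free on `U`. -/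
theorem uwvf_fundamental_divergence_free
    (U : Set (Fin 3 → ℝ)) (hU : IsOpen U) (κ : ℝ) (ε μ : ℂ) (hμ : μ ≠ 0)
    (E ξ : (Fin 3 → ℝ) → Fin 3 → ℂ)
    (hE : ContDiffOn ℝ 2 E U) (hξ : ContDiffOn ℝ 2 ξ U)
    (hME : ∀ x ∈ U, curl3 (fun y => μ⁻¹ • curl3 E y) x = ((κ : ℂ) ^ 2 * ε) • E x)
    (hMξ : ∀ x ∈ U, curl3 (fun y => ((starRingEnd ℂ) μ)⁻¹ • curl3 ξ y) x
      = ((κ : ℂ) ^ 2 * (starRingEnd ℂ) ε) • ξ x) :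
    ∀ x ∈ U,
      div3 (fun y => cross3 (μ⁻¹ • curl3 E y) (conjV (ξ y))
        + cross3 (E y) (conjV (((starRingEnd ℂ) μ)⁻¹ • curl3 ξ y))) x = 0 := by
  intro x hx
  -- componentwise smoothness facts at x
  have hEx : ContDiffAt ℝ 2 E x := hE.contDiffAt (hU.mem_nhds hx)
  have hξx : ContDiffAt ℝ 2 ξ x := hξ.contDiffAt (hU.mem_nhds hx)
  have hEc : ∀ i, ContDiffAt ℝ 2 (fun y => E y i) x := fun i => contDiffAt_pi.1 hEx i
  have hξc : ∀ i, ContDiffAt ℝ 2 (fun y => ξ y i) x := fun i => contDiffAt_pi.1 hξx i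
  have dE : ∀ i, DifferentiableAt ℝ (fun y => E y i) x :=
    fun i => (hEc i).differentiableAt two_ne_zero
  have dξ : ∀ i, DifferentiableAt ℝ (fun y => ξ y i) x :=
    fun i => (hξc i).differentiableAt two_ne_zero
  have dpdE : ∀ j i, DifferentiableAt ℝ (pd j (fun y => E y i)) x :=
    fun j i => diff_pd_of_contDiffAt (hEc i) j
  have dpdξ : ∀ j i, DifferentiableAt ℝ (pd j (fun y => ξ y i)) x :=
    fun j i => diff_pd_of_contDiffAt (hξc i) j
  -- differentiability of components of curl3 E and curl3 ξ
  have dcurlE : ∀ i, DifferentiableAt ℝ (fun y => curl3 E y i) x := by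
    intro i
    fin_cases i
    · exact ((dpdE 1 2).sub (dpdE 2 1))
    · exact ((dpdE 2 0).sub (dpdE 0 2))
    · exact ((dpdE 0 1).sub (dpdE 1 0))
  have dcurlξ : ∀ i, DifferentiableAt ℝ (fun y => curl3 ξ y i) x := by
    intro i
    fin_cases i
    · exact ((dpdξ 1 2).sub (dpdξ 2 1))
    · exact ((dpdξ 2 0).sub (dpdξ 0 2))
    · exact ((dpdξ 0 1).sub (dpdξ 1 0))
  have dA : ∀ i, DifferentiableAt ℝ (fun y => (μ⁻¹ • curl3 E y) i) x := by
    intro i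
    simp only [Pi.smul_apply, smul_eq_mul]
    exact (dcurlE i).const_mul _
  have dQ : ∀ i, DifferentiableAt ℝ
      (fun y => (((starRingEnd ℂ) μ)⁻¹ • curl3 ξ y) i) x := by
    intro i
    simp only [Pi.smul_apply, smul_eq_mul]
    exact (dcurlξ i).const_mul _
  have dv : ∀ i, DifferentiableAt ℝ (fun y => conjV (ξ y) i) x := by
    intro i; exact diff_conj (dξ i)
  have dw : ∀ i, DifferentiableAt ℝ
      (fun y => conjV (((starRingEnd ℂ) μ)⁻¹ • curl3 ξ y) i) x := by
    intro i; exact diff_conj (dQ i)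
  -- split the divergence
  rw [div3_add _ _ x
      (fun i => by
        fin_cases i
        · exact ((dA 1).mul (dv 2)).sub ((dA 2).mul (dv 1))
        · exact ((dA 2).mul (dv 0)).sub ((dA 0).mul (dv 2))
        · exact ((dA 0).mul (dv 1)).sub ((dA 1).mul (dv 0)))
      (fun i => by
        fin_cases i
        · exact ((dE 1).mul (dw 2)).sub ((dE 2).mul (dw 1))
        · exact ((dE 2).mul (dw 0)).sub ((dE 0).mul (dw 2))
        · exact ((dE 0).mul (dw 1)).sub ((dE 1).mul (dw 0))),
    div3_cross _ _ x dA dv, div3_cross _ _ x dE dw]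
  -- compute the curls appearing
  have hcv : curl3 (fun y => conjV (ξ y)) x = conjV (curl3 ξ x) :=
    curl3_conjV ξ x dξ
  have hcw : curl3 (fun y => conjV (((starRingEnd ℂ) μ)⁻¹ • curl3 ξ y)) x
      = conjV (((κ : ℂ) ^ 2 * (starRingEnd ℂ) ε) • ξ x) := by
    rw [curl3_conjV _ x dQ, hMξ x hx]
  rw [hcv, hcw, hME x hx]
  simp only [Pi.smul_apply, smul_eq_mul, conjV, map_mul, map_inv₀,
    Complex.conj_conj, map_pow, Complex.conj_ofReal, Fin.sum_univ_three]
  ring
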